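/- arXiv:2208.06214 — 5 statements merged into one kernel-verified Lean document; each statement's English description precedes it below -/
import Mathlib

section
/- Let (s,t) ∈ ℂ² with s ≠ 0 and t ≠ 0, and define K_w^{(s,t)}(z) = (1/√s) exp[(t z² - conj(t w²) + 2 z w̄)/(2s)]. Then K_w^{(s,t)} belongs to the Fock space F² if and only if |s| > |t|. -/
open MeasureTheory Complex

/-- The Gaussian measure dλ(z) = (1/π) e^{-|z|²} dA(z) on ℂ. -/
noncomputable def gaussMeasure : Measure ℂ :=
  volume.withDensity (fun z => ENNReal.ofReal (Real.exp (-(‖z‖)^2) / Real.pi))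

/-- The principal complex square root. -/
noncomputable def csqrt (z : ℂ) : ℂ := z ^ ((1:ℂ)/2)

/-- The two-parameter kernel K^{(s,t)}(z,w). -/
noncomputable def Kst (s t z w : ℂ) : ℂ :=
  (csqrt s)⁻¹ *
    Complex.exp ((t*z^2 - starRingEnd ℂ (t*w^2) + 2*z*(starRingEnd ℂ w)) / (2*s))

/-- Membership in the Fock space F²: entire and square integrable w.r.t. dλ. -/
def MemFock (f : ℂ → ℂ) : Prop :=
  Differentiable ℂ f ∧ Integrable (fun z => (‖f z‖)^2) gaussMeasure

/-! With `a = t / s`, the weighted density `‖K z‖² e^{-‖z‖²}` is a positive constant times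
`exp (Re (a z² + b z) - ‖z‖²)`. Rotating `z` by a unit `u` with `u² a = ‖a‖` turns the exponent
into `-(1 - ‖a‖) x² - (1 + ‖a‖) y²` plus terms linear in `x = Re z` and `y = Im z`, so the integrand
is a product of two one-dimensional Gaussians with linear terms. Such a product is integrable iff
both quadratic coefficients are positive, i.e. iff `‖a‖ < 1`. -/

theorem integrable_prod_mul_iff {α β L : Type*} [MeasurableSpace α] [MeasurableSpace β]
    [NormedDivisionRing L] {μ : Measure α} {ν : Measure β} [SFinite μ] [SFinite ν] [NeZero μ]
    [NeZero ν] {f : α → L} {g : β → L} (hf : ∀ x, f x ≠ 0) (hg : ∀ y, g y ≠ 0) :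
    Integrable (fun p : α × β => f p.1 * g p.2) (μ.prod ν) ↔ Integrable f μ ∧ Integrable g ν := by
  refine ⟨fun h => ⟨?_, ?_⟩, fun h => h.1.mul_prod h.2⟩
  · obtain ⟨y, hy⟩ := h.prod_left_ae.exists
    simpa [mul_assoc, hg y] using hy.mul_const (g y)⁻¹
  · obtain ⟨x, hx⟩ := h.prod_right_ae.exists
    simpa [← mul_assoc, hf x] using hx.const_mul (f x)⁻¹

theorem integrable_exp_neg_mul_sq_add_mul_iff {c : ℝ} (β : ℝ) :
    Integrable (fun x : ℝ => Real.exp (-c * x ^ 2 + β * x)) ↔ 0 < c := by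
  refine ⟨fun h => ?_, fun hc => ?_⟩
  · -- one of `exp (± β x)` is at least `1`, so the pure Gaussian is dominated by `f x + f (-x)`
    refine integrable_exp_neg_mul_sq_iff.mp <| (h.add h.comp_neg).mono
      (by fun_prop : Continuous fun x : ℝ => Real.exp (-c * x ^ 2)).aestronglyMeasurable
      (Filter.Eventually.of_forall fun x => ?_)
    have h₁ := Real.exp_pos (-c * x ^ 2 + β * x)
    have h₂ := Real.exp_pos (-c * (-x) ^ 2 + β * -x)
    rw [Pi.add_apply, Real.norm_of_nonneg (Real.exp_pos _).le,
      Real.norm_of_nonneg (by positivity)]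
    rcases le_total 0 (β * x) with hβx | hβx
    · have := Real.exp_le_exp.mpr (by linarith : -c * x ^ 2 ≤ -c * x ^ 2 + β * x)
      linarith
    · have := Real.exp_le_exp.mpr (by nlinarith : -c * x ^ 2 ≤ -c * (-x) ^ 2 + β * -x)
      linarith
  · have := (integrable_cexp_quadratic (b := (c : ℂ)) (by simpa using hc) (β : ℂ) 0).norm
    refine this.congr (Filter.Eventually.of_forall fun x => ?_)
    simp only [Complex.norm_exp, add_zero]
    norm_cast

theorem integrable_exp_quadratic_mul_exp_quadratic_iff (c₁ c₂ β₁ β₂ : ℝ) :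
    Integrable (fun p : ℝ × ℝ =>
        Real.exp (-c₁ * p.1 ^ 2 + β₁ * p.1) * Real.exp (-c₂ * p.2 ^ 2 + β₂ * p.2)) ↔
      0 < c₁ ∧ 0 < c₂ := by
  rw [Measure.volume_eq_prod, ← integrable_exp_neg_mul_sq_add_mul_iff β₁,
    ← integrable_exp_neg_mul_sq_add_mul_iff β₂]
  exact integrable_prod_mul_iff (f := fun x => Real.exp (-c₁ * x ^ 2 + β₁ * x))
    (g := fun y => Real.exp (-c₂ * y ^ 2 + β₂ * y)) (fun _ => (Real.exp_pos _).ne')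
    (fun _ => (Real.exp_pos _).ne')

theorem Circle.exists_sq_mul_eq_norm (a : ℂ) : ∃ u : Circle, (u : ℂ) ^ 2 * a = ‖a‖ := by
  refine ⟨Circle.exp (-(a.arg / 2)), ?_⟩
  nth_rewrite 2 [← Complex.norm_mul_exp_arg_mul_I a]
  rw [Circle.coe_exp, ← Complex.exp_nat_mul, mul_left_comm, ← Complex.exp_add]
  push_cast
  ring_nf
  simp

theorem re_ofReal_mul_sq_add_mul_sub_norm_sq (r : ℝ) (c : ℂ) (x y : ℝ) :
    ((r : ℂ) * (⟨x, y⟩ : ℂ) ^ 2 + c * (⟨x, y⟩ : ℂ)).re - ‖(⟨x, y⟩ : ℂ)‖ ^ 2 =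
      (-(1 - r) * x ^ 2 + c.re * x) + (-(1 + r) * y ^ 2 + -c.im * y) := by
  rw [Complex.sq_norm, Complex.normSq_mk]
  simp only [Complex.add_re, Complex.mul_re, Complex.ofReal_re, Complex.ofReal_im, sq,
    Complex.mul_im]
  ring

theorem integrable_exp_re_quadratic_sub_norm_sq_iff (a b : ℂ) :
    Integrable (fun z : ℂ => Real.exp ((a * z ^ 2 + b * z).re - ‖z‖ ^ 2)) ↔ ‖a‖ < 1 := by
  obtain ⟨u, hu⟩ := Circle.exists_sq_mul_eq_norm a
  rw [← integrable_comp (rotation u), ← (Complex.volume_preserving_equiv_real_prod.symm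
    Complex.measurableEquivRealProd).integrable_comp_emb
    Complex.measurableEquivRealProd.symm.measurableEmbedding]
  have hsplit : ((fun z : ℂ => Real.exp ((a * z ^ 2 + b * z).re - ‖z‖ ^ 2)) ∘ rotation u) ∘
      Complex.measurableEquivRealProd.symm = fun p : ℝ × ℝ =>
        Real.exp (-(1 - ‖a‖) * p.1 ^ 2 + (b * u).re * p.1) *
          Real.exp (-(1 + ‖a‖) * p.2 ^ 2 + -(b * u).im * p.2) := by
    funext ⟨x, y⟩
    have hnorm : ‖(u : ℂ) * ⟨x, y⟩‖ = ‖(⟨x, y⟩ : ℂ)‖ := by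
      rw [norm_mul, Circle.norm_coe, one_mul]
    have hquad : a * ((u : ℂ) * ⟨x, y⟩) ^ 2 + b * ((u : ℂ) * ⟨x, y⟩) =
        (‖a‖ : ℂ) * (⟨x, y⟩ : ℂ) ^ 2 + (b * u) * (⟨x, y⟩ : ℂ) := by
      rw [← hu]; ring
    simp only [Function.comp_apply, Complex.measurableEquivRealProd_symm_apply, rotation_apply]
    rw [hnorm, hquad, re_ofReal_mul_sq_add_mul_sub_norm_sq, Real.exp_add]
  rw [hsplit, integrable_exp_quadratic_mul_exp_quadratic_iff]
  constructor
  · exact fun h => by linarith [h.1]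
  · exact fun h => ⟨by linarith, by linarith [norm_nonneg a]⟩

theorem integrable_gaussMeasure_iff {f : ℂ → ℝ} :
    Integrable f gaussMeasure ↔ Integrable fun z => f z * Real.exp (-‖z‖ ^ 2) := by
  rw [gaussMeasure, integrable_withDensity_iff (by fun_prop)
    (ae_of_all _ fun _ => ENNReal.ofReal_lt_top)]
  conv_rhs => rw [← integrable_mul_const_iff (inv_ne_zero Real.pi_ne_zero).isUnit]
  refine integrable_congr (ae_of_all _ fun z => ?_)
  dsimp only
  rw [ENNReal.toReal_ofReal (by positivity)]
  ring

theorem csqrt_ne_zero {s : ℂ} (hs : s ≠ 0) : csqrt s ≠ 0 := by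
  simp [csqrt, Complex.cpow_eq_zero_iff, hs]

theorem differentiable_Kst (s t w : ℂ) : Differentiable ℂ fun z => Kst s t z w := by
  unfold Kst
  fun_prop

theorem norm_Kst_sq (s t z w : ℂ) :
    ‖Kst s t z w‖ ^ 2 = ‖csqrt s‖⁻¹ ^ 2 * Real.exp (-starRingEnd ℂ (t * w ^ 2) / s).re *
      Real.exp (t / s * z ^ 2 + 2 * starRingEnd ℂ w / s * z).re := by
  have hexponent : 2 * ((t * z ^ 2 - starRingEnd ℂ (t * w ^ 2) + 2 * z * starRingEnd ℂ w) / (2 * s))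
      = -starRingEnd ℂ (t * w ^ 2) / s + (t / s * z ^ 2 + 2 * starRingEnd ℂ w / s * z) := by
    ring
  rw [mul_assoc, ← Real.exp_add, ← Complex.add_re, ← hexponent, Kst, norm_mul, norm_inv,
    Complex.norm_exp, mul_pow, ← Real.exp_nat_mul]
  simp

theorem kernel_in_Fock_iff_general (s t : ℂ) (hs : s ≠ 0) (w : ℂ) :
    MemFock (fun z => Kst s t z w) ↔ ‖t‖ < ‖s‖ := by
  set C := ‖csqrt s‖⁻¹ ^ 2 * Real.exp (-starRingEnd ℂ (t * w ^ 2) / s).re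
  have hC : C ≠ 0 := by
    have := csqrt_ne_zero hs
    positivity
  have hweighted : ∀ z : ℂ, ‖Kst s t z w‖ ^ 2 * Real.exp (-‖z‖ ^ 2) =
      C * Real.exp ((t / s * z ^ 2 + 2 * starRingEnd ℂ w / s * z).re - ‖z‖ ^ 2) := by
    intro z
    rw [norm_Kst_sq, Real.exp_sub, Real.exp_neg]
    ring
  rw [MemFock, and_iff_right (differentiable_Kst s t w), integrable_gaussMeasure_iff,
    funext hweighted, integrable_const_mul_iff hC.isUnit,
    integrable_exp_re_quadratic_sub_norm_sq_iff, norm_div, div_lt_one (norm_pos_iff.mpr hs)]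

theorem kernel_in_Fock_iff (s t : ℂ) (hs : s ≠ 0) (ht : t ≠ 0) (w : ℂ) :
    MemFock (fun z => Kst s t z w) ↔ ‖t‖ < ‖s‖ :=
  kernel_in_Fock_iff_general s t hs w
end

section
/- Let (s,t) ∈ ℂ² with |s| > |t|. Then the F²-norm of the kernel K_w^{(s,t)} satisfies ‖K_w^{(s,t)}‖ = (|s|² - |t|²)^{-1/4} · exp[|w|²/(2(|s|² - |t|²))] · |exp[t(|t|² + 1 - |s|²) w² / (2 s̄ (|s|² - |t|²))]|. -/
/-!
Writing `α = t / s`, `β = w̄ / s`, the squared modulus of the kernel is `|s|⁻¹ e^{-Re(t w² / s̄)}`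
times `exp (Re (α z² + 2 β z))`. Against `e^{-|z|²}` this is a real Gaussian on `ℝ²` with the
positive definite form of matrix `[[1 - Re α, Im α], [Im α, 1 + Re α]]`, of determinant
`1 - |α|² = (|s|² - |t|²) / |s|²`; integrating out one variable and then the other gives the
closed form, and the theorem is its square root.
-/

open MeasureTheory Complex

open scoped Real ComplexConjugate

section RealGaussian

variable {b : ℝ} (hb : b < 0) (c d : ℝ)
include hb

theorem integral_exp_quadratic :
    ∫ x : ℝ, rexp (b * x ^ 2 + c * x + d) = √(π / -b) * rexp (d - c ^ 2 / (4 * b)) := by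
  have key := integral_cexp_quadratic (b := (b : ℂ)) (by simpa using hb) c d
  have hsqrt : ((π : ℂ) / -b) ^ (1 / 2 : ℂ) = (√(π / -b) : ℂ) := by
    rw [Real.sqrt_eq_rpow, ofReal_cpow (div_pos Real.pi_pos (neg_pos.mpr hb)).le]
    push_cast; rfl
  rw [hsqrt] at key
  exact_mod_cast key

theorem lintegral_ofReal_exp_quadratic :
    ∫⁻ x : ℝ, ENNReal.ofReal (rexp (b * x ^ 2 + c * x + d))
      = ENNReal.ofReal (√(π / -b) * rexp (d - c ^ 2 / (4 * b))) := by
  have hint : Integrable (fun x : ℝ ↦ rexp (b * x ^ 2 + c * x + d)) := by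
    have h := (integrable_cexp_quadratic' (b := (b : ℂ)) (by simpa using hb) c d).norm
    convert h using 2 with x
    rw [Complex.norm_exp]
    norm_cast
  rw [← ofReal_integral_eq_lintegral_ofReal hint (.of_forall fun _ ↦ (Real.exp_pos _).le),
    integral_exp_quadratic hb]

end RealGaussian

theorem integral_exp_neg_quadratic_form_prod {a b c : ℝ} (hb : 0 < b) (hdet : 0 < a * b - c ^ 2)
    (u v : ℝ) :
    ∫ p : ℝ × ℝ, rexp (-(a * p.1 ^ 2 + 2 * c * p.1 * p.2 + b * p.2 ^ 2) + 2 * (u * p.1 + v * p.2))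
      = π / √(a * b - c ^ 2) *
        rexp ((b * u ^ 2 - 2 * c * u * v + a * v ^ 2) / (a * b - c ^ 2)) := by
  set Δ := a * b - c ^ 2
  have inner (x : ℝ) : ∫⁻ y, ENNReal.ofReal
        (rexp (-(a * x ^ 2 + 2 * c * x * y + b * y ^ 2) + 2 * (u * x + v * y)))
      = ENNReal.ofReal (√(π / b)) *
        ENNReal.ofReal (rexp (-(Δ / b) * x ^ 2 + 2 * (u - c * v / b) * x + v ^ 2 / b)) := by
    have hQ (y : ℝ) : -(a * x ^ 2 + 2 * c * x * y + b * y ^ 2) + 2 * (u * x + v * y)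
        = -b * y ^ 2 + 2 * (v - c * x) * y + (-a * x ^ 2 + 2 * u * x) := by ring
    simp_rw [hQ]
    rw [lintegral_ofReal_exp_quadratic (by linarith), neg_neg,
      ENNReal.ofReal_mul (Real.sqrt_nonneg _)]
    congr 3
    field_simp
    ring
  have hΔb : 0 < Δ / b := div_pos hdet hb
  rw [integral_eq_lintegral_of_nonneg_ae (.of_forall fun _ ↦ (Real.exp_pos _).le)
      (by fun_prop), Measure.volume_eq_prod, lintegral_prod _ (by fun_prop)]
  simp_rw [inner]
  rw [lintegral_const_mul' _ _ ENNReal.ofReal_ne_top,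
    lintegral_ofReal_exp_quadratic (by linarith), neg_neg,
    ← ENNReal.ofReal_mul (Real.sqrt_nonneg _), ENNReal.toReal_ofReal (by positivity),
    ← mul_assoc, ← Real.sqrt_mul (by positivity)]
  have hπ : π / b * (π / (Δ / b)) = (π / √Δ) ^ 2 := by
    rw [div_pow, Real.sq_sqrt hdet.le]; field_simp
  rw [hπ, Real.sqrt_sq (by positivity)]
  congr 2
  field_simp
  ring

theorem Complex.sq_norm_eq_re_sq_add_im_sq (z : ℂ) : ‖z‖ ^ 2 = z.re ^ 2 + z.im ^ 2 := by
  rw [Complex.sq_norm, normSq_apply]; ring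

theorem integral_exp_neg_sq_norm_add_re {α : ℂ} (hα : ‖α‖ < 1) (β : ℂ) :
    ∫ z : ℂ, rexp (-‖z‖ ^ 2 + (α * z ^ 2 + 2 * β * z).re)
      = π / √(1 - ‖α‖ ^ 2) * rexp ((‖β‖ ^ 2 + (conj α * β ^ 2).re) / (1 - ‖α‖ ^ 2)) := by
  have hdet : (1 - α.re) * (1 + α.re) - α.im ^ 2 = 1 - ‖α‖ ^ 2 := by
    rw [sq_norm_eq_re_sq_add_im_sq]; ring
  have hre : α.re < 1 := by
    nlinarith [sq_norm_eq_re_sq_add_im_sq α, sq_nonneg α.im, norm_nonneg α]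
  have hpos : 0 < (1 - α.re) * (1 + α.re) - α.im ^ 2 := by
    rw [hdet]; nlinarith [norm_nonneg α]
  have h := volume_preserving_equiv_real_prod.integral_comp'
    (fun p : ℝ × ℝ ↦ rexp (-((1 - α.re) * p.1 ^ 2 + 2 * α.im * p.1 * p.2 + (1 + α.re) * p.2 ^ 2)
      + 2 * (β.re * p.1 + -β.im * p.2)))
  rw [integral_exp_neg_quadratic_form_prod (by nlinarith [sq_nonneg α.im]) hpos, hdet] at h
  convert h using 1
  · congr with z
    simp only [measurableEquivRealProd_apply, sq_norm_eq_re_sq_add_im_sq]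
    simp [pow_two]
    ring
  · rw [sq_norm_eq_re_sq_add_im_sq β]
    congr 3
    simp [pow_two]
    ring

theorem integral_gaussMeasure (f : ℂ → ℝ) :
    ∫ z, f z ∂gaussMeasure = π⁻¹ * ∫ z, rexp (-‖z‖ ^ 2) * f z := by
  rw [gaussMeasure, integral_withDensity_eq_integral_toReal_smul (by fun_prop)
    (.of_forall fun _ ↦ ENNReal.ofReal_lt_top), ← integral_const_mul]
  congr with z
  rw [ENNReal.toReal_ofReal (by positivity), smul_eq_mul]
  ring

theorem integral_gaussMeasure_exp_re {α : ℂ} (hα : ‖α‖ < 1) (β : ℂ) :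
    ∫ z, rexp ((α * z ^ 2 + 2 * β * z).re) ∂gaussMeasure
      = (√(1 - ‖α‖ ^ 2))⁻¹ * rexp ((‖β‖ ^ 2 + (conj α * β ^ 2).re) / (1 - ‖α‖ ^ 2)) := by
  simp_rw [integral_gaussMeasure, ← Real.exp_add, integral_exp_neg_sq_norm_add_re hα]
  field_simp

theorem norm_csqrt (z : ℂ) : ‖csqrt z‖ = √‖z‖ := by
  rw [csqrt, Real.sqrt_eq_rpow, ← norm_cpow_real]
  norm_num

theorem sq_norm_Kst (s t z w : ℂ) :
    ‖Kst s t z w‖ ^ 2 = ‖s‖⁻¹ * rexp (-(t * w ^ 2 / conj s).re) *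
      rexp ((t / s * z ^ 2 + 2 * (conj w / s) * z).re) := by
  have hconj : conj (t * w ^ 2) / s = conj (t * w ^ 2 / conj s) := by simp
  rw [Kst, norm_mul, norm_inv, norm_csqrt, mul_pow, inv_pow, Real.sq_sqrt (norm_nonneg _),
    Complex.norm_exp, ← Real.exp_nat_mul, mul_assoc ‖s‖⁻¹, ← Real.exp_add]
  congr 2
  calc _ = (t / s * z ^ 2 + 2 * (conj w / s) * z - conj (t * w ^ 2) / s).re := by
        rw [Nat.cast_ofNat, ← re_ofReal_mul, ofReal_ofNat]; congr 1; ring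
    _ = _ := by rw [sub_re, hconj, conj_re]; ring

theorem integral_sq_norm_Kst {s t : ℂ} (h : ‖t‖ < ‖s‖) (w : ℂ) :
    ∫ z, ‖Kst s t z w‖ ^ 2 ∂gaussMeasure
      = (√(‖s‖ ^ 2 - ‖t‖ ^ 2))⁻¹ * rexp ((‖w‖ ^ 2 + (‖t‖ ^ 2 + 1 - ‖s‖ ^ 2) *
          (t * w ^ 2 / conj s).re) / (‖s‖ ^ 2 - ‖t‖ ^ 2)) := by
  have hs₀ : 0 < ‖s‖ := (norm_nonneg t).trans_lt h
  have hs : s ≠ 0 := norm_pos_iff.mp hs₀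
  have hD : 0 < ‖s‖ ^ 2 - ‖t‖ ^ 2 := by nlinarith [norm_nonneg t]
  have hα : ‖t / s‖ < 1 := by rwa [norm_div, div_lt_one hs₀]
  have h1 : 1 - ‖t / s‖ ^ 2 = (‖s‖ ^ 2 - ‖t‖ ^ 2) / ‖s‖ ^ 2 := by
    rw [norm_div]; field_simp
  have h2 : ‖conj w / s‖ ^ 2 = ‖w‖ ^ 2 / ‖s‖ ^ 2 := by rw [norm_div, norm_conj, div_pow]
  have h3 : (conj (t / s) * (conj w / s) ^ 2).re = (t * w ^ 2 / conj s).re / ‖s‖ ^ 2 := by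
    have hss : ((‖s‖ ^ 2 : ℝ) : ℂ) = s * conj s := by rw [mul_conj, normSq_eq_norm_sq]
    rw [← conj_re, ← div_ofReal_re, hss]
    congr 1
    have : conj s ≠ 0 := by simpa using hs
    simp only [map_div₀, map_mul, map_pow, conj_conj]
    field_simp
  simp_rw [sq_norm_Kst, integral_const_mul, integral_gaussMeasure_exp_re hα, h1, h2, h3,
    Real.sqrt_div hD.le, Real.sqrt_sq hs₀.le]
  rw [mul_mul_mul_comm, ← Real.exp_add]
  congr 2
  · field_simp
  · field_simp
    ring

theorem rpow_neg_one_fourth_sq {x : ℝ} (hx : 0 ≤ x) : (x ^ (-(1 / 4) : ℝ)) ^ 2 = (√x)⁻¹ := by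
  rw [← Real.rpow_natCast, ← Real.rpow_mul hx, Real.sqrt_eq_rpow, ← Real.rpow_neg hx]
  norm_num

theorem kernel_norm_formula (s t : ℂ) (h : ‖t‖ < ‖s‖) (w : ℂ) :
    Real.sqrt (∫ z, (‖Kst s t z w‖)^2 ∂gaussMeasure)
    = ((‖s‖)^2 - (‖t‖)^2) ^ (-(1/4) : ℝ) *
      Real.exp ((‖w‖)^2 / (2*((‖s‖)^2 - (‖t‖)^2))) *
      ‖Complex.exp (t * (((‖t‖)^2 + 1 - (‖s‖)^2 : ℝ) : ℂ) * w^2 /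
        (2 * (starRingEnd ℂ s) * ((((‖s‖)^2 - (‖t‖)^2 : ℝ)) : ℂ)))‖ := by
  have hD : 0 < ‖s‖ ^ 2 - ‖t‖ ^ 2 := by nlinarith [norm_nonneg t]
  have hexp : t * (((‖t‖)^2 + 1 - (‖s‖)^2 : ℝ) : ℂ) * w^2 /
      (2 * (starRingEnd ℂ s) * ((((‖s‖)^2 - (‖t‖)^2 : ℝ)) : ℂ))
      = (((‖t‖ ^ 2 + 1 - ‖s‖ ^ 2) / (2 * (‖s‖ ^ 2 - ‖t‖ ^ 2)) : ℝ) : ℂ) *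
        (t * w ^ 2 / conj s) := by
    rw [ofReal_div, ofReal_mul, ofReal_ofNat]; ring
  rw [hexp, Complex.norm_exp, re_ofReal_mul, integral_sq_norm_Kst h,
    ← Real.sqrt_sq (by positivity : 0 ≤ (‖s‖ ^ 2 - ‖t‖ ^ 2) ^ (-(1 / 4) : ℝ) * _ * _),
    mul_pow, mul_pow, rpow_neg_one_fourth_sq hD.le, mul_assoc, ← Real.exp_nat_mul,
    ← Real.exp_nat_mul, ← Real.exp_add]
  congr 4
  field_simp
  ring
end

section
/- Let (s,t) ∈ ℂ² with |s| > |t|. Then for every u ∈ ℂ, the operator T^{(s,t)} applied to the reproducing kernel K_u(z) = e^{zū} gives T^{(s,t)}K_u = K_u^{(s,t)}, i.e. ∫_ℂ K^{(s,t)}(z,w) e^{wū} dλ(w) = (1/√s) exp[(tz² - conj(tu²) + 2zū)/(2s)]. -/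
/-!
Up to factors independent of `w`, `K^{(s,t)}(z,w) e^{wū}` is `exp (c w - a w̄² + b w̄)` with
`a = t̄ / (2s)`, `b = z / s`, `c = ū`, and `|a| < 1/2` because `|t| < |s|`. For `|a| < 1` the
weighted integral of this exponential against `dλ` is `exp (b c - a c²)`: in coordinates
`w = x + iy`, the exponent together with the weight `-|w|²` is a quadratic polynomial in `y` with
leading coefficient `a - 1`, of negative real part, and integrating out `y` and then `x` by the
one-dimensional complex Gaussian formula leaves the prefactors `(π / (1 - a))^{1/2}` and
`(π (1 - a))^{1/2}`, whose product is `π`. Fubini applies because the real part of the exponent is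
at most `-(1 - |a|) |w|² + O(|w|)`.
-/

open MeasureTheory Complex

open scoped ComplexConjugate

open Real in
theorem integral_gaussMeasure_s6 {E : Type*} [NormedAddCommGroup E] [NormedSpace ℝ E]
    (f : ℂ → E) :
    ∫ w, f w ∂gaussMeasure = ∫ w, (rexp (-‖w‖ ^ 2) / π) • f w := by
  rw [gaussMeasure, integral_withDensity_eq_integral_toReal_smul (by fun_prop)
    (ae_of_all _ fun _ => ENNReal.ofReal_lt_top)]
  congr 1 with w
  rw [ENNReal.toReal_ofReal (by positivity)]

theorem integral_cexp_gaussMeasure (f : ℂ → ℂ) :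
    ∫ w, cexp (f w) ∂gaussMeasure = (Real.pi : ℂ)⁻¹ * ∫ w, cexp (f w - w * conj w) := by
  rw [integral_gaussMeasure_s6, ← integral_const_mul]
  congr 1 with w
  rw [real_smul, exp_sub, mul_conj, normSq_eq_norm_sq]
  push_cast [ofReal_exp]
  rw [exp_neg]
  field_simp

theorem integral_complex_eq_integral_integral {E : Type*} [NormedAddCommGroup E]
    [NormedSpace ℝ E] {f : ℂ → E} (hf : Integrable f) :
    ∫ z, f z = ∫ x : ℝ, ∫ y : ℝ, f (x + y * I) := by
  have e := volume_preserving_equiv_real_prod.symm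
  rw [← e.integral_comp measurableEquivRealProd.symm.measurableEmbedding, Measure.volume_eq_prod,
    integral_prod]
  · simp [mk_eq_add_mul_I]
  · rw [← Measure.volume_eq_prod]
    exact (e.integrable_comp_emb measurableEquivRealProd.symm.measurableEmbedding).mpr hf

theorem re_conj_quadratic_le (a b c w : ℂ) :
    (c * w - a * conj w ^ 2 + b * conj w - w * conj w).re
      ≤ -(1 - ‖a‖) * ‖w‖ ^ 2 + (‖b‖ + ‖c‖) * ‖w‖ := by
  have h1 := re_le_norm (c * w)
  have h2 := re_le_norm (-(a * conj w ^ 2))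
  have h3 := re_le_norm (b * conj w)
  simp only [norm_mul, norm_neg, norm_pow, norm_conj] at h1 h2 h3
  rw [mul_conj, normSq_eq_norm_sq]
  simp only [sub_re, add_re, neg_re, ofReal_re] at h2 ⊢
  nlinarith

theorem integrable_cexp_conj_quadratic {a : ℂ} (ha : ‖a‖ < 1) (b c : ℂ) :
    Integrable fun w : ℂ => cexp (c * w - a * conj w ^ 2 + b * conj w - w * conj w) := by
  set k := (1 - ‖a‖) / 2
  set m := ‖b‖ + ‖c‖
  have hk : 0 < k := by simp only [k]; linarith
  have hgauss : Integrable fun w : ℂ => Real.exp (-k * ‖w‖ ^ 2) := by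
    simpa [norm_exp, ← ofReal_pow] using (GaussianFourier.integrable_cexp_neg_mul_sq_norm_add
      (b := (k : ℂ)) (by simpa) 0 (0 : ℂ)).norm
  refine (hgauss.const_mul (Real.exp (m ^ 2 / (4 * k)))).mono' (by fun_prop)
    (ae_of_all _ fun w => ?_)
  rw [norm_exp, ← Real.exp_add]
  refine Real.exp_le_exp.mpr ((re_conj_quadratic_le a b c w).trans ?_)
  have hgap : m ^ 2 / (4 * k) + -k * ‖w‖ ^ 2 - (-(1 - ‖a‖) * ‖w‖ ^ 2 + m * ‖w‖)
      = (2 * k * ‖w‖ - m) ^ 2 / (4 * k) := by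
    rw [show 1 - ‖a‖ = 2 * k by simp only [k]; ring]
    field_simp
    ring
  linarith [show 0 ≤ (2 * k * ‖w‖ - m) ^ 2 / (4 * k) by positivity]

theorem ofReal_div_cpow_half_mul_ofReal_mul_cpow_half {r : ℝ} (hr : 0 < r) {w : ℂ}
    (hw : w ∈ slitPlane) :
    ((r : ℂ) / w) ^ (1 / 2 : ℂ) * ((r : ℂ) * w) ^ (1 / 2 : ℂ) = r := by
  obtain ⟨harg, hw0⟩ := mem_slitPlane_iff_arg.mp hw
  have hr0 : (r : ℂ) ≠ 0 := ofReal_ne_zero.mpr hr.ne'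
  rw [cpow_def_of_ne_zero (div_ne_zero hr0 hw0), cpow_def_of_ne_zero (mul_ne_zero hr0 hw0),
    ← exp_add, div_eq_mul_inv, log_ofReal_mul hr (inv_ne_zero hw0), log_inv w harg,
    log_ofReal_mul hr hw0]
  ring_nf
  rw [← ofReal_exp, Real.exp_log hr]

open Real in
theorem integral_cexp_conj_quadratic {a : ℂ} (ha : ‖a‖ < 1) (b c : ℂ) :
    ∫ w : ℂ, cexp (c * w - a * conj w ^ 2 + b * conj w - w * conj w)
      = π * cexp (b * c - a * c ^ 2) := by
  have hre : (a - 1).re < 0 := by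
    rw [sub_re, one_re, sub_neg]; exact (re_le_norm a).trans_lt ha
  have hre_inv : ((a - 1)⁻¹).re < 0 := by
    rw [inv_re]; exact div_neg_of_neg_of_pos hre (normSq_pos.mpr fun h => by simp [h] at hre)
  have ha1 : a - 1 ≠ 0 := fun h => by simp [h] at hre
  have inner (x : ℝ) : ∫ y : ℝ, cexp (c * (x + y * I) - a * conj (x + y * I) ^ 2
        + b * conj (x + y * I) - (x + y * I) * conj (x + y * I))
      = (π / (1 - a)) ^ (1 / 2 : ℂ) * cexp ((a - 1)⁻¹ * x ^ 2
        + (2 * a * c - b - c) * (a - 1)⁻¹ * x + (c - b) ^ 2 / (4 * (a - 1))) := by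
    have hy (y : ℝ) : c * (x + y * I) - a * conj (x + y * I) ^ 2 + b * conj (x + y * I)
          - (x + y * I) * conj (x + y * I)
        = (a - 1) * y ^ 2 + (c - b + 2 * a * x) * I * y + (-(1 + a) * x ^ 2 + (c + b) * x) := by
      simp only [map_add, map_mul, conj_ofReal, conj_I]
      linear_combination (1 - a) * y ^ 2 * I_sq
    simp_rw [hy, integral_cexp_quadratic hre, neg_sub]
    congr 2
    field_simp
    linear_combination -(c - b + 2 * a * x) ^ 2 * I_sq
  rw [integral_complex_eq_integral_integral (integrable_cexp_conj_quadratic ha b c)]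
  simp_rw [inner, integral_const_mul, integral_cexp_quadratic hre_inv]
  have hslit : 1 - a ∈ slitPlane := by
    simpa [sub_eq_add_neg] using mem_slitPlane_of_norm_lt_one (z := -a) (by rwa [norm_neg])
  have hdiv : (π : ℂ) / -(a - 1)⁻¹ = π * (1 - a) := by
    rw [← inv_neg, neg_sub, div_inv_eq_mul]
  rw [← mul_assoc, hdiv, ofReal_div_cpow_half_mul_ofReal_mul_cpow_half pi_pos hslit]
  congr 2
  field_simp
  ring

theorem T_on_reproducing_kernel (s t : ℂ) (h : ‖t‖ < ‖s‖) (u z : ℂ) :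
    ∫ w, Kst s t z w * Complex.exp (w * starRingEnd ℂ u) ∂gaussMeasure
      = (csqrt s)⁻¹ *
        Complex.exp ((t*z^2 - starRingEnd ℂ (t*u^2) + 2*z*(starRingEnd ℂ u)) / (2*s)) := by
  have hs : s ≠ 0 := norm_pos_iff.mp ((norm_nonneg t).trans_lt h)
  set a := conj t / (2 * s)
  have ha : ‖a‖ < 1 := by
    rw [norm_div, norm_mul, norm_conj, Complex.norm_two, div_lt_one (by positivity)]
    linarith [norm_nonneg t]
  have hK (w : ℂ) : Kst s t z w * cexp (w * conj u)
      = (csqrt s)⁻¹ * cexp (t * z ^ 2 / (2 * s))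
        * cexp (conj u * w - a * conj w ^ 2 + z / s * conj w) := by
    simp only [Kst, mul_assoc, ← exp_add]
    congr 2
    simp only [a, map_mul, map_pow]
    field_simp
    ring
  simp_rw [hK, integral_const_mul, integral_cexp_gaussMeasure, integral_cexp_conj_quadratic ha,
    inv_mul_cancel_left₀ (ofReal_ne_zero.mpr Real.pi_ne_zero), mul_assoc, ← exp_add]
  congr 2
  simp only [a, map_mul, map_pow]
  field_simp
  ring
end

section
/- Let (s,t) ∈ ℂ² with |s|² = 1 + |t|². The quadratic equation s t̄ γ² + (s² - 1 - |t|²)γ - s t = 0 has a unique solution γ in the open unit disk 𝔻 if and only if |Re s| < 1. Moreover, when |Re s| < 1 and t ≠ 0, writing s = x + iy, the solution is γ = i(-y + sgn(y)√(1-x²))/t̄, and it satisfies |s + γt̄| = 1. -/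
/-!
Since `‖s‖² = s s̄`, the middle coefficient is `s² - s s̄ = 2 i s Im s`, and multiplying the
equation by `t̄ / s` turns it into `(t̄ γ + i Im s)² = (Re s)² - 1`, where
`‖t‖² = (Re s)² + (Im s)² - 1`. If `|Re s| ≥ 1` the right side is a nonnegative real, so every root
has `‖t̄ γ‖² = (Re s)² - 1 + (Im s)² = ‖t‖²` and lies on the unit circle (for `t = 0` every `γ` is a
root). If `|Re s| < 1` the roots are `t̄ γ = i (-Im s ± √(1 - (Re s)²))`, and since
`‖t‖² = (Im s)² - (1 - (Re s)²)` exactly the one with sign `sgn (Im s)` lies in the disk.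
-/

open Complex ComplexConjugate

lemma Real.sign_sq_of_ne_zero {r : ℝ} (hr : r ≠ 0) : Real.sign r ^ 2 = 1 := by
  rcases Real.sign_apply_eq_of_ne_zero r hr with h | h <;> simp [h]

lemma Real.neg_add_sign_mul_sq_lt {y a : ℝ} (ha : 0 < a) (hay : a ^ 2 < y ^ 2) :
    (-y + Real.sign y * a) ^ 2 < y ^ 2 - a ^ 2 := by
  have hy : y ≠ 0 := by rintro rfl; nlinarith
  rcases hy.lt_or_gt with hy | hy
  · rw [Real.sign_of_neg hy]; nlinarith
  · rw [Real.sign_of_pos hy]; nlinarith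

lemma Real.sq_sub_sq_le_neg_sub_sign_mul_sq (y : ℝ) {a : ℝ} (ha : 0 ≤ a) :
    y ^ 2 - a ^ 2 ≤ (-y - Real.sign y * a) ^ 2 := by
  nlinarith [mul_nonneg (Real.sign_mul_nonneg y) ha, sq_nonneg (Real.sign y * a), sq_nonneg a]

namespace GammaDisk

noncomputable def quad (s t γ : ℂ) : ℂ :=
  s * conj t * γ ^ 2 + (s ^ 2 - 1 - ((‖t‖ ^ 2 : ℝ) : ℂ)) * γ - s * t

noncomputable def root (s t : ℂ) (e : ℝ) : ℂ :=
  I * ((-s.im + e * √(1 - s.re ^ 2) : ℝ) : ℂ) / conj t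

variable {s t γ : ℂ}

lemma sq_norm_eq_re_sq_add_im_sq_sub_one (h : ‖s‖ ^ 2 = 1 + ‖t‖ ^ 2) :
    ‖t‖ ^ 2 = s.re ^ 2 + s.im ^ 2 - 1 := by
  rw [← Complex.normSq_add_mul_I, re_add_im, ← Complex.sq_norm, h]; ring

lemma ne_zero_of_sq_norm_eq (h : ‖s‖ ^ 2 = 1 + ‖t‖ ^ 2) : s ≠ 0 := by
  rintro rfl
  nlinarith [sq_nonneg ‖t‖, h, norm_zero (E := ℂ)]

lemma im_ne_zero_of_abs_re_lt_one (h : ‖s‖ ^ 2 = 1 + ‖t‖ ^ 2) (hx : |s.re| < 1) : s.im ≠ 0 := by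
  intro hy
  have := sq_norm_eq_re_sq_add_im_sq_sub_one h
  rw [hy] at this
  nlinarith [sq_nonneg ‖t‖, (sq_lt_one_iff_abs_lt_one s.re).mpr hx]

lemma quad_eq (h : ‖s‖ ^ 2 = 1 + ‖t‖ ^ 2) (γ : ℂ) :
    quad s t γ = s * (conj t * γ ^ 2 + 2 * s.im * I * γ - t) := by
  have hnorm : ((‖t‖ ^ 2 : ℝ) : ℂ) = s * conj s - 1 := by
    rw [mul_conj, ← Complex.sq_norm, h]; push_cast; ring
  have hconj : conj s = s - 2 * s.im * I := by
    have := sub_conj s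
    push_cast at this
    linear_combination -this
  rw [quad, hnorm, hconj]; ring

lemma conj_mul_quad (h : ‖s‖ ^ 2 = 1 + ‖t‖ ^ 2) (γ : ℂ) :
    conj t * quad s t γ = s * ((conj t * γ + s.im * I) ^ 2 - ((s.re ^ 2 - 1 : ℝ) : ℂ)) := by
  have ht : conj t * t = ((s.re ^ 2 + s.im ^ 2 - 1 : ℝ) : ℂ) := by
    rw [← sq_norm_eq_re_sq_add_im_sq_sub_one h, mul_comm, mul_conj, ← Complex.sq_norm]
  rw [quad_eq h]
  push_cast at ht ⊢
  linear_combination (-s) * ht - s * s.im ^ 2 * I_sq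

lemma quad_eq_zero_iff (h : ‖s‖ ^ 2 = 1 + ‖t‖ ^ 2) (ht : t ≠ 0) :
    quad s t γ = 0 ↔ (conj t * γ + s.im * I) ^ 2 = ((s.re ^ 2 - 1 : ℝ) : ℂ) := by
  rw [← mul_right_inj' ((map_ne_zero (starRingEnd ℂ)).mpr ht), conj_mul_quad h, mul_zero,
    mul_eq_zero, sub_eq_zero, or_iff_right (ne_zero_of_sq_norm_eq h)]

lemma quad_zero_right (h : ‖s‖ ^ 2 = 1) (γ : ℂ) :
    quad s 0 γ = 2 * s * s.im * I * γ := by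
  rw [quad_eq (by rwa [norm_zero, zero_pow two_ne_zero, add_zero])]
  simp only [map_zero]; ring

lemma norm_eq_one_of_quad_eq_zero (h : ‖s‖ ^ 2 = 1 + ‖t‖ ^ 2) (ht : t ≠ 0) (hx : 1 ≤ |s.re|)
    (hγ : quad s t γ = 0) : ‖γ‖ = 1 := by
  set b := √(s.re ^ 2 - 1)
  have hb : b ^ 2 = s.re ^ 2 - 1 :=
    Real.sq_sqrt (sub_nonneg.mpr ((one_le_sq_iff_one_le_abs _).mpr hx))
  rw [quad_eq_zero_iff h ht, show ((s.re ^ 2 - 1 : ℝ) : ℂ) = (b : ℂ) ^ 2 by rw [← hb, ofReal_pow],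
    sq_eq_sq_iff_eq_or_eq_neg] at hγ
  have hnorm_of_real (c : ℝ) (hc : c ^ 2 = b ^ 2) (hγc : conj t * γ + s.im * I = c) :
      ‖conj t * γ‖ = ‖t‖ := by
    rw [eq_sub_of_add_eq hγc, ← sq_eq_sq₀ (norm_nonneg _) (norm_nonneg _),
      sq_norm_eq_re_sq_add_im_sq_sub_one h, Complex.sq_norm, sub_eq_add_neg, ← neg_mul,
      ← ofReal_neg, normSq_add_mul_I, hc, hb]
    ring
  have hnorm : ‖conj t * γ‖ = ‖t‖ := by
    rcases hγ with hγ | hγ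
    · exact hnorm_of_real b rfl hγ
    · exact hnorm_of_real (-b) (neg_sq b) (by push_cast; exact hγ)
  rwa [norm_mul, norm_conj, mul_eq_left₀ (norm_ne_zero_iff.mpr ht)] at hnorm

lemma conj_mul_add_eq_iff (ht : t ≠ 0) (e : ℝ) :
    conj t * γ + s.im * I = ((e * √(1 - s.re ^ 2) : ℝ) : ℂ) * I ↔ γ = root s t e := by
  rw [root, eq_div_iff ((map_ne_zero (starRingEnd ℂ)).mpr ht)]
  push_cast
  constructor <;> intro hγ <;> linear_combination hγ

lemma quad_eq_zero_iff_eq_root (h : ‖s‖ ^ 2 = 1 + ‖t‖ ^ 2) (ht : t ≠ 0) (hx : |s.re| < 1) :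
    quad s t γ = 0 ↔ γ = root s t (Real.sign s.im) ∨ γ = root s t (-Real.sign s.im) := by
  set e := Real.sign s.im
  set a := √(1 - s.re ^ 2)
  have ha : (a : ℂ) ^ 2 = 1 - (s.re : ℂ) ^ 2 := by
    exact_mod_cast Real.sq_sqrt (sub_nonneg.mpr ((sq_le_one_iff_abs_le_one _).mpr hx.le))
  have he : (e : ℂ) ^ 2 = 1 := by
    exact_mod_cast Real.sign_sq_of_ne_zero (im_ne_zero_of_abs_re_lt_one h hx)
  have hsq : ((s.re ^ 2 - 1 : ℝ) : ℂ) = (((e * a : ℝ) : ℂ) * I) ^ 2 := by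
    push_cast
    linear_combination (-(e : ℂ) ^ 2 * (a : ℂ) ^ 2) * I_sq + (a : ℂ) ^ 2 * he + ha
  rw [quad_eq_zero_iff h ht, hsq, sq_eq_sq_iff_eq_or_eq_neg, conj_mul_add_eq_iff ht,
    ← conj_mul_add_eq_iff ht (-e)]
  push_cast
  rw [neg_mul, neg_mul]

lemma norm_root (s t : ℂ) (e : ℝ) : ‖root s t e‖ = |-s.im + e * √(1 - s.re ^ 2)| / ‖t‖ := by
  rw [root, norm_div, norm_mul, norm_I, one_mul, norm_real, Real.norm_eq_abs, norm_conj]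

lemma norm_root_sign_lt_one (h : ‖s‖ ^ 2 = 1 + ‖t‖ ^ 2) (ht : t ≠ 0) (hx : |s.re| < 1) :
    ‖root s t (Real.sign s.im)‖ < 1 := by
  have hx2 : 0 < 1 - s.re ^ 2 := sub_pos.mpr ((sq_lt_one_iff_abs_lt_one _).mpr hx)
  have hnorm : ‖t‖ ^ 2 = s.im ^ 2 - √(1 - s.re ^ 2) ^ 2 := by
    rw [sq_norm_eq_re_sq_add_im_sq_sub_one h, Real.sq_sqrt hx2.le]; ring
  have ht2 : 0 < ‖t‖ ^ 2 := by positivity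
  rw [norm_root, div_lt_one (norm_pos_iff.mpr ht)]
  refine abs_lt_of_sq_lt_sq ?_ (norm_nonneg t)
  rw [hnorm]
  exact Real.neg_add_sign_mul_sq_lt (Real.sqrt_pos.mpr hx2) (by linarith)

lemma one_le_norm_root_neg_sign (h : ‖s‖ ^ 2 = 1 + ‖t‖ ^ 2) (ht : t ≠ 0) (hx : |s.re| < 1) :
    1 ≤ ‖root s t (-Real.sign s.im)‖ := by
  have hx2 : 0 ≤ 1 - s.re ^ 2 := sub_nonneg.mpr ((sq_le_one_iff_abs_le_one _).mpr hx.le)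
  have hnorm : ‖t‖ ^ 2 = s.im ^ 2 - √(1 - s.re ^ 2) ^ 2 := by
    rw [sq_norm_eq_re_sq_add_im_sq_sub_one h, Real.sq_sqrt hx2]; ring
  rw [norm_root, one_le_div (norm_pos_iff.mpr ht), ← abs_norm, ← sq_le_sq, hnorm, neg_mul,
    ← sub_eq_add_neg]
  exact Real.sq_sub_sq_le_neg_sub_sign_mul_sq _ (Real.sqrt_nonneg _)

lemma norm_add_root_mul_conj (ht : t ≠ 0) (hx : |s.re| ≤ 1) {e : ℝ} (he : e ^ 2 = 1) :
    ‖s + root s t e * conj t‖ = 1 := by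
  have hx2 : 0 ≤ 1 - s.re ^ 2 := sub_nonneg.mpr ((sq_le_one_iff_abs_le_one _).mpr hx)
  have hs : s + I * ((-s.im + e * √(1 - s.re ^ 2) : ℝ) : ℂ) =
      s.re + (e * √(1 - s.re ^ 2) : ℝ) * I := by
    apply Complex.ext <;> simp
  rw [root, div_mul_cancel₀ _ ((map_ne_zero (starRingEnd ℂ)).mpr ht), hs, norm_add_mul_I,
    mul_pow, he, one_mul, Real.sq_sqrt hx2, add_sub_cancel, Real.sqrt_one]

lemma not_existsUnique_of_one_le_abs_re (h : ‖s‖ ^ 2 = 1 + ‖t‖ ^ 2) (hx : 1 ≤ |s.re|) :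
    ¬ ∃! γ : ℂ, ‖γ‖ < 1 ∧ quad s t γ = 0 := by
  rintro ⟨γ, ⟨hlt, hγ⟩, huniq⟩
  rcases eq_or_ne t 0 with rfl | ht
  · have hs : ‖s‖ ^ 2 = 1 := by simpa using h
    have hy : s.im = 0 := by
      have := sq_norm_eq_re_sq_add_im_sq_sub_one h
      rw [norm_zero] at this
      nlinarith [(one_le_sq_iff_one_le_abs s.re).mpr hx, sq_nonneg s.im]
    have hroot (δ : ℂ) : quad s 0 δ = 0 := by simp [quad_zero_right hs, hy]
    have := (huniq 0 ⟨by simp, hroot 0⟩).trans (huniq (1 / 2) ⟨by norm_num, hroot _⟩).symm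
    norm_num at this
  · exact hlt.ne (norm_eq_one_of_quad_eq_zero h ht hx hγ)

lemma existsUnique_of_abs_re_lt_one (h : ‖s‖ ^ 2 = 1 + ‖t‖ ^ 2) (hx : |s.re| < 1) :
    ∃! γ : ℂ, ‖γ‖ < 1 ∧ quad s t γ = 0 := by
  rcases eq_or_ne t 0 with rfl | ht
  · have hs : ‖s‖ ^ 2 = 1 := by simpa using h
    refine ⟨0, ⟨by simp, by simp [quad_zero_right hs]⟩, fun γ ⟨_, hγ⟩ => ?_⟩
    simpa [quad_zero_right hs, ne_zero_of_sq_norm_eq h, im_ne_zero_of_abs_re_lt_one h hx]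
      using hγ
  · refine ⟨root s t (Real.sign s.im), ⟨norm_root_sign_lt_one h ht hx,
      (quad_eq_zero_iff_eq_root h ht hx).mpr (Or.inl rfl)⟩, fun γ ⟨hlt, hγ⟩ => ?_⟩
    rcases (quad_eq_zero_iff_eq_root h ht hx).mp hγ with rfl | rfl
    · rfl
    · exact absurd hlt (one_le_norm_root_neg_sign h ht hx).not_gt

end GammaDisk

theorem unique_gamma_in_disk (s t : ℂ)
    (h : (‖s‖)^2 = 1 + (‖t‖)^2) :
    ((∃! γ : ℂ, ‖γ‖ < 1 ∧
        s * (starRingEnd ℂ t) * γ^2 + (s^2 - 1 - (((‖t‖)^2 : ℝ) : ℂ)) * γ - s * t = 0)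
      ↔ |s.re| < 1) ∧
    (|s.re| < 1 → t ≠ 0 →
      (‖(Complex.I * ((-s.im + Real.sign s.im * Real.sqrt (1 - s.re^2) : ℝ) : ℂ)
          / starRingEnd ℂ t)‖ < 1) ∧
      (s * (starRingEnd ℂ t) *
          (Complex.I * ((-s.im + Real.sign s.im * Real.sqrt (1 - s.re^2) : ℝ) : ℂ)
            / starRingEnd ℂ t)^2
        + (s^2 - 1 - (((‖t‖)^2 : ℝ) : ℂ)) *
          (Complex.I * ((-s.im + Real.sign s.im * Real.sqrt (1 - s.re^2) : ℝ) : ℂ)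
            / starRingEnd ℂ t)
        - s * t = 0) ∧
      ‖(s + (Complex.I * ((-s.im + Real.sign s.im * Real.sqrt (1 - s.re^2) : ℝ) : ℂ)
          / starRingEnd ℂ t) * starRingEnd ℂ t)‖ = 1) := by
  refine ⟨⟨fun hex => not_le.mp fun hx => GammaDisk.not_existsUnique_of_one_le_abs_re h hx hex,
    GammaDisk.existsUnique_of_abs_re_lt_one h⟩, fun hx ht => ⟨?_, ?_, ?_⟩⟩
  · exact GammaDisk.norm_root_sign_lt_one h ht hx
  · exact (GammaDisk.quad_eq_zero_iff_eq_root h ht hx).mpr (Or.inl rfl)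
  · exact GammaDisk.norm_add_root_mul_conj ht hx.le
      (Real.sign_sq_of_ne_zero (GammaDisk.im_ne_zero_of_abs_re_lt_one h hx))
end

section
/- Let μ ∈ ℂ with Re μ > 0 and let n be a nonnegative integer. Then for all z ∈ ℂ, ∫_ℝ xⁿ e^{-μ(x+z)²} dx = c₀zⁿ + c₁z^{n-1} + ⋯ + c_n, where c_k = 0 for odd k, and c_k = (-1)^{n-k} n! Γ((k+1)/2) / (k!(n-k)!(√μ)^{k+1}) for even k. In particular the integral is a polynomial in z of degree n with leading coefficient (-1)ⁿ√π/√μ. -/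
open MeasureTheory Complex

/-!
Write `xⁿ = ((x + z) - z)ⁿ` binomially; this reduces the integral to the shifted moments
`Mₖ(z) = ∫ (x + z)ᵏ exp (-μ (x + z)²) dx`. These do not depend on `z`: the complex
Gaussian integral gives `M₀ = √(π / μ) = Γ(1/2) / √μ`, and integration by parts against
the derivative of the Gaussian gives `M₁ = 0` and `2μ Mₖ₊₂ = (k + 1) Mₖ`, which is the
recursion satisfied by `Γ((k + 1)/2) / √μ^(k + 1)` for even `k`.
-/

open scoped Real
open Finset

lemma csqrt_sq {μ : ℂ} (hμ : μ ≠ 0) : csqrt μ ^ 2 = μ := by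
  rw [csqrt, sq, ← cpow_add _ _ hμ]
  norm_num

lemma csqrt_ne_zero_s15 {μ : ℂ} (hμ : μ ≠ 0) : csqrt μ ≠ 0 := by
  intro h
  apply hμ
  rw [← csqrt_sq hμ, h, zero_pow two_ne_zero]

lemma ofReal_mul_cpow {r : ℝ} (hr : 0 < r) {x : ℂ} (hx : x ≠ 0) (s : ℂ) :
    ((r : ℂ) * x) ^ s = (r : ℂ) ^ s * x ^ s := by
  have hr' : (r : ℂ) ≠ 0 := ofReal_ne_zero.mpr hr.ne'
  rw [cpow_def_of_ne_zero (mul_ne_zero hr' hx), log_ofReal_mul hr hx, ofReal_log hr.le, add_mul,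
    Complex.exp_add, ← cpow_def_of_ne_zero hr', ← cpow_def_of_ne_zero hx]

lemma pi_div_cpow_one_half {μ : ℂ} (hμ : 0 < μ.re) :
    ((π : ℂ) / μ) ^ ((1 : ℂ) / 2) = Complex.Gamma (1 / 2) / csqrt μ := by
  have hμ0 := ne_zero_of_re_pos hμ
  have harg : μ.arg ≠ π := fun h => by linarith [(arg_eq_pi_iff.mp h).1]
  rw [div_eq_mul_inv (π : ℂ), ofReal_mul_cpow Real.pi_pos (inv_ne_zero hμ0), inv_cpow _ _ harg,
    Complex.Gamma_one_half_eq, csqrt, ← div_eq_mul_inv]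

lemma norm_ofReal_add_pow_le (x : ℝ) (w : ℂ) (n : ℕ) :
    ‖((x : ℂ) + w) ^ n‖
      ≤ n.factorial * Real.exp ‖w‖ * (Real.exp x + Real.exp (-x)) := by
  have hfac : (0 : ℝ) < n.factorial := by exact_mod_cast n.factorial_pos
  calc ‖((x : ℂ) + w) ^ n‖ = ‖(x : ℂ) + w‖ ^ n := norm_pow _ _
    _ ≤ n.factorial * Real.exp ‖(x : ℂ) + w‖ :=
        (div_le_iff₀' hfac).mp (Real.pow_div_factorial_le_exp _ (norm_nonneg _) n)
    _ ≤ n.factorial * (Real.exp |x| * Real.exp ‖w‖) := by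
        rw [← Real.exp_add]
        gcongr
        simpa using norm_add_le (x : ℂ) w
    _ ≤ n.factorial * ((Real.exp x + Real.exp (-x)) * Real.exp ‖w‖) := by
        gcongr
        exact Real.exp_abs_le x
    _ = n.factorial * Real.exp ‖w‖ * (Real.exp x + Real.exp (-x)) := by ring

lemma integrable_ofReal_add_pow_mul_cexp_quadratic {b : ℂ} (hb : b.re < 0) (c d w : ℂ)
    (n : ℕ) :
    Integrable fun x : ℝ => ((x : ℂ) + w) ^ n * cexp (b * x ^ 2 + c * x + d) := by
  -- `exp x + exp (-x)` absorbs the polynomial factor and shifts the linear coefficient by `± 1`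
  have hshift (s x : ℝ) : ‖cexp (b * x ^ 2 + (c + s) * x + d)‖
      = ‖cexp (b * x ^ 2 + c * x + d)‖ * Real.exp (s * x) := by
    rw [show b * x ^ 2 + (c + s) * x + d = (b * x ^ 2 + c * x + d) + ((s * x : ℝ) : ℂ) by
      push_cast; ring, Complex.exp_add, norm_mul, norm_exp_ofReal]
  have hdom := ((integrable_cexp_quadratic' hb (c + ((1 : ℝ) : ℂ)) d).norm.add
    (integrable_cexp_quadratic' hb (c + ((-1 : ℝ) : ℂ)) d).norm).const_mul
      (n.factorial * Real.exp ‖w‖)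
  refine hdom.mono' (by fun_prop) (ae_of_all _ fun x => ?_)
  rw [norm_mul, Pi.add_apply, hshift, hshift, one_mul, neg_one_mul]
  have := mul_le_mul_of_nonneg_right (norm_ofReal_add_pow_le x w n)
    (norm_nonneg (cexp (b * x ^ 2 + c * x + d)))
  linarith

lemma hasDerivAt_cexp_neg_mul_add_sq (μ z : ℂ) (x : ℝ) :
    HasDerivAt (fun x : ℝ => cexp (-μ * ((x : ℂ) + z) ^ 2))
      (-2 * μ * ((x : ℂ) + z) * cexp (-μ * ((x : ℂ) + z) ^ 2)) x := by
  have h := ((((hasDerivAt_id (x : ℂ)).add_const z).pow 2).const_mul (-μ)).cexp.comp_ofReal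
  simp only [Pi.pow_apply, id] at h
  convert h using 1
  ring

lemma hasDerivAt_ofReal_add_pow (z : ℂ) (m : ℕ) (x : ℝ) :
    HasDerivAt (fun x : ℝ => ((x : ℂ) + z) ^ m) (m * ((x : ℂ) + z) ^ (m - 1)) x := by
  simpa using (((hasDerivAt_id (x : ℂ)).add_const z).pow m).comp_ofReal

section ShiftedGaussian

variable {μ : ℂ}

lemma integrable_ofReal_add_pow_mul_cexp_neg_mul_add_sq (hμ : 0 < μ.re) (z : ℂ) (k : ℕ) :
    Integrable fun x : ℝ => ((x : ℂ) + z) ^ k * cexp (-μ * ((x : ℂ) + z) ^ 2) := by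
  have hb : (-μ).re < 0 := by simpa using hμ
  refine (integrable_ofReal_add_pow_mul_cexp_quadratic hb (-(2 * μ * z)) (-(μ * z ^ 2)) z k).congr
    (ae_of_all _ fun x => ?_)
  ring_nf

lemma integral_cexp_neg_mul_add_sq (hμ : 0 < μ.re) (z : ℂ) :
    ∫ x : ℝ, cexp (-μ * ((x : ℂ) + z) ^ 2) = ((π : ℂ) / μ) ^ ((1 : ℂ) / 2) := by
  have hμ0 := ne_zero_of_re_pos hμ
  have hb : (-μ).re < 0 := by simpa using hμ
  have hexpand (x : ℝ) :
      -μ * ((x : ℂ) + z) ^ 2 = -μ * x ^ 2 + -(2 * μ * z) * x + -(μ * z ^ 2) := by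
    ring
  simp_rw [hexpand]
  rw [integral_cexp_quadratic hb, neg_neg]
  have hconst : -(μ * z ^ 2) - (-(2 * μ * z)) ^ 2 / (4 * -μ) = 0 := by
    field_simp
    ring
  rw [hconst, Complex.exp_zero, mul_one]

/-- Integration by parts against `d/dx exp (-μ (x + z)²) = -2μ (x + z) exp (-μ (x + z)²)`. -/
lemma two_mul_integral_ofReal_add_pow_succ_mul_cexp (hμ : 0 < μ.re) (z : ℂ) (m : ℕ) :
    2 * μ * ∫ x : ℝ, ((x : ℂ) + z) ^ (m + 1) * cexp (-μ * ((x : ℂ) + z) ^ 2)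
      = m * ∫ x : ℝ, ((x : ℂ) + z) ^ (m - 1) * cexp (-μ * ((x : ℂ) + z) ^ 2) := by
  have hint := integrable_ofReal_add_pow_mul_cexp_neg_mul_add_sq hμ z
  have hibp := integral_mul_deriv_eq_deriv_mul_of_integrable
    (fun x _ => hasDerivAt_ofReal_add_pow z m x)
    (fun x _ => hasDerivAt_cexp_neg_mul_add_sq μ z x)
    (((hint (m + 1)).const_mul (-2 * μ)).congr
      (ae_of_all _ fun x => by simp only [Pi.mul_apply]; ring))
    (((hint (m - 1)).const_mul (m : ℂ)).congr
      (ae_of_all _ fun x => by simp only [Pi.mul_apply]; ring))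
    (hint m)
  have hleft (x : ℝ) :
      ((x : ℂ) + z) ^ m * (-2 * μ * ((x : ℂ) + z) * cexp (-μ * ((x : ℂ) + z) ^ 2))
        = -2 * μ * (((x : ℂ) + z) ^ (m + 1) * cexp (-μ * ((x : ℂ) + z) ^ 2)) := by ring
  have hright (x : ℝ) : (m : ℂ) * ((x : ℂ) + z) ^ (m - 1) * cexp (-μ * ((x : ℂ) + z) ^ 2)
      = m * (((x : ℂ) + z) ^ (m - 1) * cexp (-μ * ((x : ℂ) + z) ^ 2)) := by ring
  simp_rw [hleft, hright, integral_const_mul] at hibp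
  linear_combination -hibp

end ShiftedGaussian

/-- `∫ (x + z)ᵏ exp (-μ (x + z)²) dx`, which does not depend on `z`. -/
noncomputable def gaussianMoment (μ : ℂ) (k : ℕ) : ℂ :=
  if Even k then Complex.Gamma (((k : ℂ) + 1) / 2) / csqrt μ ^ (k + 1) else 0

section GaussianMoment

variable {μ : ℂ}

lemma gaussianMoment_zero (hμ : 0 < μ.re) :
    gaussianMoment μ 0 = ((π : ℂ) / μ) ^ ((1 : ℂ) / 2) := by
  rw [pi_div_cpow_one_half hμ, gaussianMoment, if_pos (by decide)]
  norm_num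

lemma gaussianMoment_one (μ : ℂ) : gaussianMoment μ 1 = 0 :=
  if_neg Nat.not_even_one

lemma two_mul_gaussianMoment_add_two (hμ : μ ≠ 0) (k : ℕ) :
    2 * μ * gaussianMoment μ (k + 2) = (k + 1) * gaussianMoment μ k := by
  unfold gaussianMoment
  by_cases hk : Even k
  · rw [if_pos (hk.add even_two), if_pos hk]
    have harg : (((k + 2 : ℕ) : ℂ) + 1) / 2 = ((k : ℂ) + 1) / 2 + 1 := by push_cast; ring
    have hpow : csqrt μ ^ (k + 2 + 1) = csqrt μ ^ (k + 1) * μ := by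
      rw [pow_add _ (k + 1) 2, csqrt_sq hμ]
    rw [harg, Complex.Gamma_add_one _ (div_ne_zero (Nat.cast_add_one_ne_zero k) two_ne_zero), hpow]
    have := pow_ne_zero (k + 1) (csqrt_ne_zero_s15 hμ)
    field_simp
  · rw [if_neg (by simpa [Nat.even_add] using hk), if_neg hk, mul_zero, mul_zero]

lemma integral_ofReal_add_pow_mul_cexp_neg_mul_add_sq (hμ : 0 < μ.re) (z : ℂ) (k : ℕ) :
    ∫ x : ℝ, ((x : ℂ) + z) ^ k * cexp (-μ * ((x : ℂ) + z) ^ 2) = gaussianMoment μ k := by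
  have hμ0 := ne_zero_of_re_pos hμ
  induction k using Nat.twoStepInduction with
  | zero => simp only [pow_zero, one_mul, integral_cexp_neg_mul_add_sq hμ, gaussianMoment_zero hμ]
  | one =>
    have h := two_mul_integral_ofReal_add_pow_succ_mul_cexp hμ z 0
    rw [Nat.cast_zero, zero_mul, mul_eq_zero, or_iff_right (by simpa using hμ0)] at h
    rw [h, gaussianMoment_one]
  | more k ih _ =>
    have h := two_mul_integral_ofReal_add_pow_succ_mul_cexp hμ z (k + 1)
    rw [Nat.add_sub_cancel, ih, Nat.cast_add_one, ← two_mul_gaussianMoment_add_two hμ0] at h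
    exact mul_left_cancel₀ (by simpa using hμ0) h

lemma integral_pow_mul_cexp_neg_mul_add_sq (hμ : 0 < μ.re) (z : ℂ) (n : ℕ) :
    ∫ x : ℝ, (x : ℂ) ^ n * cexp (-μ * ((x : ℂ) + z) ^ 2)
      = ∑ k ∈ range (n + 1), (n.choose k : ℂ) * (-z) ^ (n - k) * gaussianMoment μ k := by
  have hexpand (x : ℝ) : (x : ℂ) ^ n * cexp (-μ * ((x : ℂ) + z) ^ 2)
      = ∑ k ∈ range (n + 1), (n.choose k : ℂ) * (-z) ^ (n - k)
          * (((x : ℂ) + z) ^ k * cexp (-μ * ((x : ℂ) + z) ^ 2)) := by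
    rw [show (x : ℂ) = ((x : ℂ) + z) + -z by ring, add_pow, sum_mul]
    refine sum_congr rfl fun k _ => ?_
    ring
  simp_rw [hexpand]
  rw [integral_finsetSum _ fun k _ =>
    (integrable_ofReal_add_pow_mul_cexp_neg_mul_add_sq hμ z k).const_mul _]
  simp_rw [integral_const_mul, integral_ofReal_add_pow_mul_cexp_neg_mul_add_sq hμ z]

lemma choose_mul_neg_pow_mul_gaussianMoment (hμ : μ ≠ 0) (z : ℂ) {n k : ℕ} (hk : k ≤ n) :
    (n.choose k : ℂ) * (-z) ^ (n - k) * gaussianMoment μ k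
      = (if Even k then
          (-1 : ℂ) ^ (n - k) * (n.factorial : ℂ) * Complex.Gamma (((k : ℂ) + 1) / 2) /
            ((k.factorial : ℂ) * ((n - k).factorial : ℂ) * (csqrt μ) ^ (k + 1))
        else 0) * z ^ (n - k) := by
  unfold gaussianMoment
  split_ifs
  · have := pow_ne_zero (k + 1) (csqrt_ne_zero_s15 hμ)
    rw [Nat.cast_choose ℂ hk, neg_pow]
    field_simp
  · rw [mul_zero, zero_mul]

end GaussianMoment

theorem gaussian_moment_polynomial (μ : ℂ) (hμ : 0 < μ.re) (n : ℕ) (z : ℂ) :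
    ∫ x : ℝ, (x:ℂ)^n * Complex.exp (-μ * ((x:ℂ) + z)^2)
      = ∑ k ∈ Finset.range (n+1),
          (if Even k then
            ((-1:ℂ))^(n-k) * (n.factorial : ℂ) * Complex.Gamma (((k:ℂ)+1)/2) /
              ((k.factorial : ℂ) * ((n-k).factorial : ℂ) * (csqrt μ)^(k+1))
          else 0) * z^(n-k) := by
  rw [integral_pow_mul_cexp_neg_mul_add_sq hμ z n]
  exact sum_congr rfl fun k hk =>
    choose_mul_neg_pow_mul_gaussianMoment (ne_zero_of_re_pos hμ) z (Nat.lt_succ_iff.mp (mem_range.mp hk))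
end
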